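/- The non-isotropic bounce S^{ani}_{f,c} preserves the Hamiltonian constraint: if 1 - Tr((K⁻)²) = 8π (φ₀⁻)², then with K⁺ = μ^{-3}(K⁻ - δ/3) + δ/3, φ₀⁺ = μ^{-3}φ₀⁻(1+f(φ₁⁻))^{1/2}, and μ⁶ = 1 + 12π(φ₀⁻)² f(φ₁⁻), one also has 1 - Tr((K⁺)²) = 8π (φ₀⁺)². -/

import Mathlib

open Real

/-!
With `tr K = 1` the constraint reads `2/3 - tr K̊² = 8π φ₀²`, where `K̊ = K - δ/3`. The bounce
multiplies `tr K̊²` by `μ⁻⁶` and `φ₀²` by `μ⁻⁶ (1 + f)`, so the new constraint is the old one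
multiplied by `μ⁻⁶` plus the defect `2/3 (1 - μ⁻⁶) - 8π μ⁻⁶ φ₀² f`, which vanishes exactly when
`μ⁶ = 1 + 12π φ₀² f`.
-/

namespace Matrix

variable {n R : Type*} [Fintype n] [DecidableEq n]

theorem trace_smul_add_smul_one_mul_self [CommRing R] (A : Matrix n n R) (c b : R) :
    ((c • A + b • 1) * (c • A + b • 1)).trace
      = c ^ 2 * (A * A).trace + 2 * c * b * A.trace + b ^ 2 * Fintype.card n := by
  simp only [add_mul, mul_add, smul_mul_smul_comm, Matrix.one_mul, mul_one,
    trace_add, trace_smul, trace_one, smul_eq_mul]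
  ring

theorem trace_rescale_traceless_mul_self [Field R] (K : Matrix n n R) (hK : K.trace = 1)
    (hd : (Fintype.card n : R) ≠ 0) (c : R) :
    ((c • (K - (Fintype.card n : R)⁻¹ • 1) + (Fintype.card n : R)⁻¹ • 1) *
        (c • (K - (Fintype.card n : R)⁻¹ • 1) + (Fintype.card n : R)⁻¹ • 1)).trace
      = c ^ 2 * ((K * K).trace - (Fintype.card n : R)⁻¹) + (Fintype.card n : R)⁻¹ := by
  rw [trace_smul_add_smul_one_mul_self]
  simp only [sub_mul, mul_sub, smul_mul_smul_comm, Matrix.smul_mul, Matrix.mul_smul,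
    Matrix.one_mul, Matrix.mul_one, trace_sub, trace_smul, trace_one, smul_eq_mul, hK]
  field_simp
  ring

end Matrix

theorem nonisotropic_bounce_hamiltonian_general
    (K : Matrix (Fin 3) (Fin 3) ℝ) (φ₀ φ₁ μ : ℝ) (f : ℝ → ℝ)
    (hf : ∀ x, 0 ≤ f x)
    (hK : K.trace = 1)
    (hham : 1 - (K * K).trace = 8 * π * φ₀ ^ 2)
    (hmu : μ ^ 6 = 1 + 12 * π * φ₀ ^ 2 * f φ₁) :
    1 - ((((μ ^ 3)⁻¹ • (K - (3 : ℝ)⁻¹ • (1 : Matrix (Fin 3) (Fin 3) ℝ))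
          + (3 : ℝ)⁻¹ • (1 : Matrix (Fin 3) (Fin 3) ℝ)) *
         ((μ ^ 3)⁻¹ • (K - (3 : ℝ)⁻¹ • (1 : Matrix (Fin 3) (Fin 3) ℝ))
          + (3 : ℝ)⁻¹ • (1 : Matrix (Fin 3) (Fin 3) ℝ))).trace)
      = 8 * π * ((μ ^ 3)⁻¹ * φ₀ * Real.sqrt (1 + f φ₁)) ^ 2 := by
  have hμ : μ ≠ 0 := by
    refine ne_zero_pow (n := 6) (by norm_num) ?_
    have : 0 ≤ 12 * π * φ₀ ^ 2 * f φ₁ := mul_nonneg (by positivity) (hf φ₁)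
    rw [hmu]; linarith
  have htrace := K.trace_rescale_traceless_mul_self hK (by norm_num) (μ ^ 3)⁻¹
  simp only [Fintype.card_fin, Nat.cast_ofNat] at htrace
  rw [htrace, mul_pow, Real.sq_sqrt (by linarith [hf φ₁])]
  field_simp
  linear_combination 3 * hham + 2 * hmu

/-- the non-isotropic bounce preserves the Hamiltonian constraint. -/
theorem nonisotropic_bounce_hamiltonian
    (K : Matrix (Fin 3) (Fin 3) ℝ) (φ₀ φ₁ μ : ℝ) (f : ℝ → ℝ)
    (hf : ∀ x, 0 ≤ f x) (hμ : 0 < μ)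
    (hK : K.trace = 1)
    (hham : 1 - (K * K).trace = 8 * π * φ₀ ^ 2)
    (hmu : μ ^ 6 = 1 + 12 * π * φ₀ ^ 2 * f φ₁) :
    1 - ((((μ ^ 3)⁻¹ • (K - (3 : ℝ)⁻¹ • (1 : Matrix (Fin 3) (Fin 3) ℝ))
          + (3 : ℝ)⁻¹ • (1 : Matrix (Fin 3) (Fin 3) ℝ)) *
         ((μ ^ 3)⁻¹ • (K - (3 : ℝ)⁻¹ • (1 : Matrix (Fin 3) (Fin 3) ℝ))
          + (3 : ℝ)⁻¹ • (1 : Matrix (Fin 3) (Fin 3) ℝ))).trace)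
      = 8 * π * ((μ ^ 3)⁻¹ * φ₀ * Real.sqrt (1 + f φ₁)) ^ 2 :=
  nonisotropic_bounce_hamiltonian_general K φ₀ φ₁ μ f hf hK hham hmu
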